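/- arXiv:1603.08147 — 3 statements merged into one kernel-verified Lean document; each statement's English description precedes it below -/
import Mathlib

section
/- Let S be a topological inverse semigroup such that: (i) every maximal subgroup of S and the semilattice E(S) of idempotents of S (with the subspace topology) are H-closed in the class of topological inverse semigroups; and (ii) every non-minimal idempotent of S is an isolated point of E(S). Then S is H-closed in the class of topological inverse semigroups, i.e., S is a closed subset of every topological inverse semigroup T that contains S as an inverse subsemigroup with the subspace topology. -/
/-!
If `x` lies in the closure of `g(S)`, then `x x⁻¹` and `x⁻¹ x` are limits of idempotents of
`g(S)`, so by H-closedness of `E(S)` they are `g e` and `g f`. Sandwiching the approximating net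
`s` as `e s f` keeps its limit `x` and makes `(e s f)(e s f)⁻¹ ≤ e`, `(e s f)⁻¹(e s f) ≤ f`
converge to `e` and `f`. An idempotent is either minimal or isolated in `E(S)`, so both
equalities eventually hold exactly: the net eventually lies in `R_e ∩ L_f = a H_f` for one of its
members `a`. H-closedness of the maximal subgroup `H_f` then puts `x` in `g(S)`.
-/

universe u v

/-- An inverse semigroup: every element has a unique (von Neumann) inverse. -/
class InverseSemigroup (S : Type u) extends Semigroup S, Inv S where
  mul_inv_mul : ∀ a : S, a * a⁻¹ * a = a
  inv_mul_inv : ∀ a : S, a⁻¹ * a * a⁻¹ = a⁻¹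
  inv_unique : ∀ a b : S, a * b * a = a → b * a * b = b → b = a⁻¹

section Green
variable {S : Type u} [Mul S]

/-- `b ∈ a·S¹`. -/
def rDvd (a b : S) : Prop := b = a ∨ ∃ s : S, a * s = b
/-- `b ∈ S¹·a`. -/
def lDvd (a b : S) : Prop := b = a ∨ ∃ s : S, s * a = b
/-- Green's relation 𝓡: `a 𝓡 b` iff `aS¹ = bS¹`. -/
def greenR (a b : S) : Prop := rDvd a b ∧ rDvd b a
/-- Green's relation 𝓛: `a 𝓛 b` iff `S¹a = S¹b`. -/
def greenL (a b : S) : Prop := lDvd a b ∧ lDvd b a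
/-- Green's relation 𝓗 = 𝓛 ∩ 𝓡. -/
def greenH (a b : S) : Prop := greenR a b ∧ greenL a b
/-- Green's relation 𝓓 = 𝓡∘𝓛 = 𝓛∘𝓡. -/
def greenD (a b : S) : Prop := ∃ c : S, greenR a c ∧ greenL c b
/-- The 𝓡-class of `a`. -/
def RClass (a : S) : Set S := {x | greenR a x}
/-- The 𝓛-class of `a`. -/
def LClass (a : S) : Set S := {x | greenL a x}
/-- The 𝓗-class of `a`. -/
def HClass (a : S) : Set S := {x | greenH a x}

end Green

/-- A subset `A` of a topological magma (with the subspace topology and induced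
multiplication) is H-closed in the class of topological inverse semigroups: whenever `A` is
embedded topologically and multiplicatively into a Hausdorff topological inverse semigroup,
its image is closed. -/
def IsHClosedTISSet {X : Type u} [Mul X] [TopologicalSpace X] (A : Set X) : Prop :=
  ∀ (T : Type v) [InverseSemigroup T] [TopologicalSpace T] [T2Space T]
    [ContinuousMul T] [ContinuousInv T] (f : A → T),
    Function.Injective f → Topology.IsInducing f →
    (∀ (x y : A) (h : (x : X) * (y : X) ∈ A), f ⟨(x : X) * (y : X), h⟩ = f x * f y) →
    IsClosed (Set.range f)

/-- A topological magma `S` is H-closed in the class of topological inverse semigroups: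
whenever `S` is embedded topologically and multiplicatively into a Hausdorff topological
inverse semigroup, its image is closed. -/
def IsHClosedTIS (S : Type u) [Mul S] [TopologicalSpace S] : Prop :=
  ∀ (T : Type v) [InverseSemigroup T] [TopologicalSpace T] [T2Space T]
    [ContinuousMul T] [ContinuousInv T] (f : S → T),
    Function.Injective f → Topology.IsInducing f →
    (∀ x y : S, f (x * y) = f x * f y) → IsClosed (Set.range f)

open Filter Topology

namespace InverseSemigroup

variable {S : Type u} [InverseSemigroup S]

protected theorem inv_inv (a : S) : a⁻¹⁻¹ = a :=
  (inv_unique a⁻¹ a (inv_mul_inv a) (mul_inv_mul a)).symm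

theorem inv_eq_self_of_isIdempotentElem {e : S} (he : IsIdempotentElem e) : e⁻¹ = e :=
  (inv_unique e e (by rw [he, he]) (by rw [he, he])).symm

theorem isIdempotentElem_mul_inv (a : S) : IsIdempotentElem (a * a⁻¹) := by
  rw [IsIdempotentElem, ← mul_assoc, mul_inv_mul]

theorem isIdempotentElem_inv_mul (a : S) : IsIdempotentElem (a⁻¹ * a) := by
  rw [IsIdempotentElem, ← mul_assoc, inv_mul_inv]

/-- The inverse `c` of `ef` satisfies `c = fce`, which forces `c` and hence `ef = c⁻¹` to be
idempotent. -/
theorem isIdempotentElem_mul {e f : S} (he : IsIdempotentElem e) (hf : IsIdempotentElem f) :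
    IsIdempotentElem (e * f) := by
  have hc : f * (e * f)⁻¹ * e = (e * f)⁻¹ := by
    refine inv_unique (e * f) _ ?_ ?_
    · calc e * f * (f * (e * f)⁻¹ * e) * (e * f)
          = e * (f * f) * (e * f)⁻¹ * (e * e) * f := by simp only [mul_assoc]
        _ = e * f := by rw [he.eq, hf.eq, mul_assoc _ e f, mul_inv_mul]
    · calc f * (e * f)⁻¹ * e * (e * f) * (f * (e * f)⁻¹ * e)
          = f * ((e * f)⁻¹ * (e * e * (f * f)) * (e * f)⁻¹) * e := by simp only [mul_assoc]
        _ = f * (e * f)⁻¹ * e := by rw [he.eq, hf.eq, inv_mul_inv, mul_assoc]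
  have hcc : IsIdempotentElem (e * f)⁻¹ := by
    calc (e * f)⁻¹ * (e * f)⁻¹ = f * ((e * f)⁻¹ * (e * f) * (e * f)⁻¹) * e := by
          conv_lhs => rw [← hc]
          simp only [mul_assoc]
      _ = (e * f)⁻¹ := by rw [inv_mul_inv, hc]
  rw [← InverseSemigroup.inv_inv (e * f), inv_eq_self_of_isIdempotentElem hcc]
  exact hcc

/-- `fe` is an inverse of the idempotent `ef`, hence equal to it. -/
theorem commute_of_isIdempotentElem {e f : S} (he : IsIdempotentElem e)
    (hf : IsIdempotentElem f) : Commute e f := by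
  have hfe : f * e = (e * f)⁻¹ := by
    refine inv_unique (e * f) (f * e) ?_ ?_
    · calc e * f * (f * e) * (e * f) = (e * (f * f)) * ((e * e) * f) := by simp only [mul_assoc]
        _ = e * f := by rw [he.eq, hf.eq]; exact isIdempotentElem_mul he hf
    · calc f * e * (e * f) * (f * e) = (f * (e * e)) * ((f * f) * e) := by simp only [mul_assoc]
        _ = f * e := by rw [he.eq, hf.eq]; exact isIdempotentElem_mul hf he
  rw [Commute, SemiconjBy, hfe, inv_eq_self_of_isIdempotentElem (isIdempotentElem_mul he hf)]

protected theorem mul_inv_rev (a b : S) : (a * b)⁻¹ = b⁻¹ * a⁻¹ := by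
  have hcomm := (commute_of_isIdempotentElem (isIdempotentElem_mul_inv b)
    (isIdempotentElem_inv_mul a)).eq
  refine (inv_unique (a * b) (b⁻¹ * a⁻¹) ?_ ?_).symm
  · calc a * b * (b⁻¹ * a⁻¹) * (a * b)
          = a * (b * b⁻¹ * (a⁻¹ * a)) * b := by
          simp only [mul_assoc]
      _ = (a * a⁻¹ * a) * (b * b⁻¹ * b) := by rw [hcomm]; simp only [mul_assoc]
      _ = a * b := by rw [mul_inv_mul, mul_inv_mul]
  · calc b⁻¹ * a⁻¹ * (a * b) * (b⁻¹ * a⁻¹)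
          = b⁻¹ * (a⁻¹ * a * (b * b⁻¹)) * a⁻¹ := by
          simp only [mul_assoc]
      _ = (b⁻¹ * b * b⁻¹) * (a⁻¹ * a * a⁻¹) := by rw [← hcomm]; simp only [mul_assoc]
      _ = b⁻¹ * a⁻¹ := by rw [inv_mul_inv, inv_mul_inv]

theorem mul_inv_eq_inv_of_mul_eq {f a : S} (hf : IsIdempotentElem f) (ha : a * f = a) :
    f * a⁻¹ = a⁻¹ := by
  conv_rhs => rw [← ha, InverseSemigroup.mul_inv_rev, inv_eq_self_of_isIdempotentElem hf]

theorem map_inv {T : Type v} [InverseSemigroup T] {g : S → T}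
    (hg : ∀ x y, g (x * y) = g x * g y) (a : S) : g a⁻¹ = (g a)⁻¹ :=
  inv_unique (g a) (g a⁻¹) (by rw [← hg, ← hg, mul_inv_mul])
    (by rw [← hg, ← hg, inv_mul_inv])

theorem inv_mul_mem_HClass {f a b : S} (hab : a * a⁻¹ = b * b⁻¹) (ha : a⁻¹ * a = f)
    (hb : b⁻¹ * b = f) : a⁻¹ * b ∈ HClass f := by
  have hR : (a⁻¹ * b) * (a⁻¹ * b)⁻¹ = f := by
    rw [InverseSemigroup.mul_inv_rev, InverseSemigroup.inv_inv, mul_assoc, ← mul_assoc b,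
      ← hab, ← mul_assoc, ← mul_assoc, inv_mul_inv, ha]
  have hL : (a⁻¹ * b)⁻¹ * (a⁻¹ * b) = f := by
    rw [InverseSemigroup.mul_inv_rev, InverseSemigroup.inv_inv, mul_assoc, ← mul_assoc a,
      hab, ← mul_assoc, ← mul_assoc, inv_mul_inv, hb]
  set z := a⁻¹ * b
  refine ⟨⟨Or.inr ⟨z, ?_⟩, Or.inr ⟨z⁻¹, hR⟩⟩, Or.inr ⟨z, ?_⟩, Or.inr ⟨z⁻¹, hL⟩⟩
  · rw [← hR, mul_inv_mul]
  · rw [← hL, ← mul_assoc, mul_inv_mul]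

end InverseSemigroup

open InverseSemigroup

theorem IsHClosedTISSet.isClosed_image {S : Type u} [Mul S] [TopologicalSpace S] {A : Set S}
    (hA : IsHClosedTISSet.{u, v} A) {T : Type v} [InverseSemigroup T] [TopologicalSpace T]
    [T2Space T] [ContinuousMul T] [ContinuousInv T] {g : S → T} (hinj : Function.Injective g)
    (hind : IsInducing g) (hmul : ∀ x y, g (x * y) = g x * g y) : IsClosed (g '' A) := by
  rw [Set.image_eq_range]
  exact hA T (fun p => g p) (fun p q h => Subtype.ext (hinj h)) (hind.comp IsInducing.subtypeVal)
    fun p q _ => hmul p q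

theorem eventually_eq_of_tendsto_of_idempotent_le {S : Type u} [Mul S] [TopologicalSpace S]
    {ι : Type*} {l : Filter ι} {e : S} {u : ι → S}
    (hiso : (∃ f : S, f * f = f ∧ f ≠ e ∧ e * f = f ∧ f * e = f) →
      ∃ U : Set S, IsOpen U ∧ U ∩ {x : S | x * x = x} = {e})
    (hidem : ∀ i, u i * u i = u i) (hle : ∀ i, e * u i = u i ∧ u i * e = u i)
    (hu : Tendsto u l (𝓝 e)) : ∀ᶠ i in l, u i = e := by
  by_cases hmin : ∃ f : S, f * f = f ∧ f ≠ e ∧ e * f = f ∧ f * e = f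
  · obtain ⟨U, hUo, hUe⟩ := hiso hmin
    have heU : e ∈ U := (hUe.symm ▸ Set.mem_singleton e : e ∈ U ∩ _).1
    filter_upwards [hu (hUo.mem_nhds heU)] with i hi
    exact (hUe ▸ ⟨hi, hidem i⟩ : u i ∈ ({e} : Set S))
  · push Not at hmin
    exact Eventually.of_forall fun i => by_contra fun hne =>
      hmin (u i) (hidem i) hne (hle i).1 (hle i).2

section Embedding

variable {S : Type u} [InverseSemigroup S] {T : Type v} [InverseSemigroup T] [TopologicalSpace T]
  [ContinuousMul T] {g : S → T}
  {ι : Type*} {l : Filter ι} {b : ι → S} {x : T}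

theorem eventually_mul_inv_eq_of_tendsto [TopologicalSpace S] [ContinuousInv T]
    (hind : IsInducing g) (hmul : ∀ x y, g (x * y) = g x * g y) {e : S}
    (hiso : (∃ f : S, f * f = f ∧ f ≠ e ∧ e * f = f ∧ f * e = f) →
      ∃ U : Set S, IsOpen U ∧ U ∩ {x : S | x * x = x} = {e})
    (he : IsIdempotentElem e) (hge : g e = x * x⁻¹) (heb : ∀ i, e * b i = b i)
    (hb : Tendsto (fun i => g (b i)) l (𝓝 x)) : ∀ᶠ i in l, b i * (b i)⁻¹ = e := by
  refine eventually_eq_of_tendsto_of_idempotent_le hiso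
    (fun i => isIdempotentElem_mul_inv (b i)) (fun i => ?_) ?_
  · have hleft : e * (b i * (b i)⁻¹) = b i * (b i)⁻¹ := by rw [← mul_assoc, heb]
    exact ⟨hleft, (commute_of_isIdempotentElem (isIdempotentElem_mul_inv _) he).eq.trans hleft⟩
  · rw [hind.tendsto_nhds_iff, hge]
    simpa only [Function.comp_def, hmul, map_inv hmul] using hb.mul hb.inv

/-- Eventually `b i ∈ R_e ∩ L_f = b i₀ · H_f`, so `x` is `g (b i₀)` times a limit point of
`g(H_f)`. -/
theorem mem_range_of_tendsto_of_eventually_mul_inv_eq [l.NeBot]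
    (hmul : ∀ x y, g (x * y) = g x * g y) {e f : S} (hH : IsClosed (g '' HClass f))
    (hbe : ∀ᶠ i in l, b i * (b i)⁻¹ = e ∧ (b i)⁻¹ * b i = f)
    (hb : Tendsto (fun i => g (b i)) l (𝓝 x)) (hge : g e = x * x⁻¹) : x ∈ Set.range g := by
  obtain ⟨i₀, hi₀⟩ := hbe.exists
  obtain ⟨z, -, hgz⟩ : (g (b i₀))⁻¹ * x ∈ g '' HClass f := by
    refine hH.mem_of_tendsto (tendsto_const_nhds.mul hb) (hbe.mono fun i hi => ?_)
    refine ⟨(b i₀)⁻¹ * b i, inv_mul_mem_HClass (hi₀.1.trans hi.1.symm) hi₀.2 hi.2, ?_⟩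
    rw [hmul, map_inv hmul]
  refine ⟨b i₀ * z, ?_⟩
  rw [hmul, hgz, ← mul_assoc, ← map_inv hmul, ← hmul, hi₀.1, hge, mul_inv_mul]

end Embedding

theorem statement_7_general {S : Type u} [InverseSemigroup S] [TopologicalSpace S]
    (hgrp : ∀ e : S, e * e = e → IsHClosedTISSet.{u, v} (HClass e))
    (hsl : IsHClosedTISSet.{u, v} {x : S | x * x = x})
    (hiso : ∀ e : S, e * e = e →
      (∃ f : S, f * f = f ∧ f ≠ e ∧ e * f = f ∧ f * e = f) →
      ∃ U : Set S, IsOpen U ∧ U ∩ {x : S | x * x = x} = {e}) :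
    IsHClosedTIS.{u, v} S := by
  intro T _ _ _ _ _ g hinj hind hmul
  refine isClosed_of_closure_subset fun x hx => ?_
  have : (comap g (𝓝 x)).NeBot := comap_neBot_iff.2 fun t ht => by
    obtain ⟨_, hy, s, rfl⟩ := mem_closure_iff_nhds.1 hx t ht
    exact ⟨s, hy⟩
  have hg : Tendsto g (comap g (𝓝 x)) (𝓝 x) := tendsto_comap
  have hE := hsl.isClosed_image hinj hind hmul
  obtain ⟨e, he : e * e = e, hge⟩ : x * x⁻¹ ∈ g '' {s | s * s = s} :=
    hE.mem_of_tendsto (hg.mul hg.inv)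
      (.of_forall fun s => ⟨_, isIdempotentElem_mul_inv s, by rw [hmul, map_inv hmul]⟩)
  obtain ⟨f, hf : f * f = f, hgf⟩ : x⁻¹ * x ∈ g '' {s | s * s = s} :=
    hE.mem_of_tendsto (hg.inv.mul hg)
      (.of_forall fun s => ⟨_, isIdempotentElem_inv_mul s, by rw [hmul, map_inv hmul]⟩)
  -- `e s f` still tends to `x x⁻¹ x x⁻¹ x = x`, and `e`, `f` are left and right identities for it
  have hb : Tendsto (fun s => g (e * s * f)) (comap g (𝓝 x)) (𝓝 x) := by
    have hexf : g e * x * g f = x := by rw [hge, hgf, mul_inv_mul, ← mul_assoc, mul_inv_mul]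
    simpa only [hmul, hexf] using
      ((tendsto_const_nhds (x := g e)).mul hg).mul (tendsto_const_nhds (x := g f))
  have hR := eventually_mul_inv_eq_of_tendsto hind hmul (hiso e he) he hge
    (fun s => by rw [← mul_assoc, ← mul_assoc, he]) hb
  have hL := eventually_mul_inv_eq_of_tendsto (b := fun s => (e * s * f)⁻¹) hind hmul
    (hiso f hf) hf (by rw [InverseSemigroup.inv_inv, hgf])
    (fun s => mul_inv_eq_inv_of_mul_eq hf (by rw [mul_assoc, hf]))
    (by simpa only [map_inv hmul] using hb.inv)
  simp only [InverseSemigroup.inv_inv] at hL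
  exact mem_range_of_tendsto_of_eventually_mul_inv_eq hmul
    ((hgrp f hf).isClosed_image hinj hind hmul) (hR.and hL) hb hge

/-- Let `S` be a topological inverse semigroup such that (i) every maximal subgroup of `S`
(the 𝓗-class of an idempotent) and the semilattice `E(S)` of idempotents are H-closed in
the class of topological inverse semigroups, and (ii) every non-minimal idempotent of `S`
is isolated in `E(S)`. Then `S` is H-closed in the class of topological inverse
semigroups. -/
theorem statement_7 {S : Type u} [InverseSemigroup S] [TopologicalSpace S] [T2Space S]
    [ContinuousMul S] [ContinuousInv S]
    (hgrp : ∀ e : S, e * e = e → IsHClosedTISSet.{u, v} (HClass e))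
    (hsl : IsHClosedTISSet.{u, v} {x : S | x * x = x})
    (hiso : ∀ e : S, e * e = e →
      (∃ f : S, f * f = f ∧ f ≠ e ∧ e * f = f ∧ f * e = f) →
      ∃ U : Set S, IsOpen U ∧ U ∩ {x : S | x * x = x} = {e}) :
    IsHClosedTIS.{u, v} S :=
  statement_7_general hgrp hsl hiso
end

section
/- Let λ ≥ 2 be a cardinal. Then every maximal chain L of the semilattice E(P_λ) of idempotents of the λ-polycyclic monoid P_λ contains 0, and L \ {0} is order-isomorphic to the chain {0, −1, −2, −3, …} of non-positive integers with the usual order (i.e., L \ {0} is an ω-chain). -/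
universe u v

/-- The λ-polycyclic monoid over the index type `ι` (of cardinality λ), realized as
`(M_λ × M_λ) ∪ {0}` where `M_λ = FreeMonoid ι` is the free monoid on λ generators;
the pair `(a, b)` encodes the element `a⁻¹b` and `none` is the zero. -/
abbrev PolyMon (ι : Type u) : Type u := Option (FreeMonoid ι × FreeMonoid ι)

/-- The nonzero element `a⁻¹b` of the polycyclic monoid. -/
def polyEl {ι : Type u} (a b : FreeMonoid ι) : PolyMon ι := some (a, b)

instance {ι : Type u} : Zero (PolyMon ι) := ⟨none⟩

instance {ι : Type u} : One (PolyMon ι) := ⟨polyEl 1 1⟩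

open Classical in
/-- Multiplication of the polycyclic monoid:
`a⁻¹b · c⁻¹d = (c₁a)⁻¹d` if `c = c₁b`; `= a⁻¹(b₁d)` if `b = b₁c`; `= 0` otherwise,
and `0` is a two-sided zero. -/
noncomputable def polyMul {ι : Type u} (x y : PolyMon ι) : PolyMon ι :=
  Option.bind x fun p => Option.bind y fun q =>
    if h : ∃ c₁ : FreeMonoid ι, q.1 = c₁ * p.2 then some (Classical.choose h * p.1, q.2)
    else if h' : ∃ b₁ : FreeMonoid ι, p.2 = b₁ * q.1 then some (p.1, Classical.choose h' * q.2)
    else none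

noncomputable instance {ι : Type u} : Mul (PolyMon ι) := ⟨polyMul⟩

/-- Inversion of the polycyclic monoid: `(a⁻¹b)⁻¹ = b⁻¹a` and `0⁻¹ = 0`. -/
instance {ι : Type u} : Inv (PolyMon ι) :=
  ⟨fun x => Option.map (fun p => (p.2, p.1)) x⟩

/-- The natural partial order on idempotents: `e ≤ f` iff `ef = fe = e`. -/
def idemLE {ι : Type u} (e f : PolyMon ι) : Prop := e * f = e ∧ f * e = e

/-- The semilattice `E(P_λ)` of idempotents of the polycyclic monoid. -/
def idemE (ι : Type u) : Set (PolyMon ι) := {x | x * x = x}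

/-- A chain of the semilattice of idempotents of the polycyclic monoid. -/
def IsChainIdem {ι : Type u} (L : Set (PolyMon ι)) : Prop :=
  L ⊆ idemE ι ∧ ∀ e ∈ L, ∀ f ∈ L, idemLE e f ∨ idemLE f e

/-- A maximal chain of the semilattice of idempotents of the polycyclic monoid. -/
def IsMaxChainIdem {ι : Type u} (L : Set (PolyMon ι)) : Prop :=
  IsChainIdem L ∧ ∀ L' : Set (PolyMon ι), IsChainIdem L' → L ⊆ L' → L' = L

/-!
Every nonzero idempotent of `P_λ` is `a⁻¹a` for a word `a`, and `a⁻¹a ≤ b⁻¹b` exactly when `b` is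
a suffix of `a`. Since `0` lies below everything, a maximal chain `L` contains it, and the words
of `L \ {0}` form a maximal chain of words under the suffix order. Such a chain is closed under
taking suffixes and, as long as there is a letter, has no longest word (one letter more on the
left of a longest word would extend it). Hence it contains exactly one word of each length, and
the length map is the required order-reversing bijection onto `ℕ`.
-/

theorem IsMaxChain.mem_of_forall_total {α : Type*} {r : α → α → Prop} {s : Set α} {a : α}
    (hs : IsMaxChain r s) (h : ∀ b ∈ s, r a b ∨ r b a) : a ∈ s :=
  hs.2 (hs.1.insert fun b hb _ => h b hb) (Set.subset_insert a s) ▸ Set.mem_insert a s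

section SuffixChain

variable {α : Type*} {S : Set (List α)}

theorem IsMaxChain.mem_of_isSuffix (hS : IsMaxChain (· <:+ ·) S) {b w : List α} (hb : b ∈ S)
    (hw : w <:+ b) : w ∈ S :=
  hS.mem_of_forall_total fun _ hc =>
    (hS.1.total hb hc).elim (fun hbc => Or.inl (hw.trans hbc))
      (fun hcb => List.suffix_or_suffix_of_suffix hw hcb)

theorem IsMaxChain.cons_mem_of_forall_length_le (hS : IsMaxChain (· <:+ ·) S) {a : List α}
    (ha : a ∈ S) (hmax : ∀ c ∈ S, c.length ≤ a.length) (x : α) : x :: a ∈ S :=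
  hS.mem_of_forall_total fun c hc => by
    rcases hS.1.total ha hc with hac | hca
    · obtain rfl := hac.eq_of_length (le_antisymm hac.length_le (hmax c hc))
      exact Or.inr (List.suffix_cons x a)
    · exact Or.inr (hca.trans (List.suffix_cons x a))

theorem IsMaxChain.exists_mem_le_length [Nonempty α] (hS : IsMaxChain (· <:+ ·) S) (n : ℕ) :
    ∃ b ∈ S, n ≤ b.length := by
  induction n with
  | zero => exact ⟨[], hS.mem_of_forall_total fun _ _ => Or.inl List.nil_suffix, le_rfl⟩
  | succ n ih =>
    obtain ⟨b, hb, hn⟩ := ih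
    by_cases hlonger : ∃ c ∈ S, b.length < c.length
    · obtain ⟨c, hc, hbc⟩ := hlonger
      exact ⟨c, hc, by omega⟩
    · simp only [not_exists, not_and, not_lt] at hlonger
      refine ⟨Classical.arbitrary α :: b, hS.cons_mem_of_forall_length_le hb hlonger _, ?_⟩
      simpa using hn

theorem IsMaxChain.exists_mem_length_eq [Nonempty α] (hS : IsMaxChain (· <:+ ·) S) (n : ℕ) :
    ∃ w ∈ S, w.length = n := by
  obtain ⟨b, hb, hn⟩ := hS.exists_mem_le_length n
  refine ⟨b.drop (b.length - n), hS.mem_of_isSuffix hb (List.drop_suffix _ _), ?_⟩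
  simp only [List.length_drop]
  omega

theorem IsMaxChain.isSuffix_iff_length_le (hS : IsMaxChain (· <:+ ·) S) {v w : List α}
    (hv : v ∈ S) (hw : w ∈ S) : w <:+ v ↔ w.length ≤ v.length := by
  refine ⟨List.IsSuffix.length_le, fun h => (hS.1.total hw hv).elim id fun hvw => ?_⟩
  obtain rfl := hvw.eq_of_length (le_antisymm hvw.length_le h)
  exact List.suffix_refl v

theorem IsMaxChain.bijective_length [Nonempty α] (hS : IsMaxChain (· <:+ ·) S) :
    Function.Bijective fun w : S => w.1.length := by
  refine ⟨fun v w h => Subtype.ext ?_, fun n => ?_⟩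
  · rcases hS.1.total v.2 w.2 with hvw | hwv
    · exact hvw.eq_of_length h
    · exact (hwv.eq_of_length h.symm).symm
  · obtain ⟨w, hw, rfl⟩ := hS.exists_mem_length_eq n
    exact ⟨⟨w, hw⟩, rfl⟩

end SuffixChain

namespace PolyMon

variable {ι : Type u}

theorem zero_mul (x : PolyMon ι) : 0 * x = 0 := rfl

theorem mul_zero (x : PolyMon ι) : x * 0 = 0 := by
  cases x <;> rfl

theorem polyEl_ne_zero (a b : FreeMonoid ι) : polyEl a b ≠ 0 :=
  Option.some_ne_none _

theorem polyEl_inj {a b c d : FreeMonoid ι} : polyEl a b = polyEl c d ↔ a = c ∧ b = d := by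
  simp [polyEl]

theorem polyEl_mul_polyEl_of_left_eq {a b c d c₁ : FreeMonoid ι} (h : c = c₁ * b) :
    polyEl a b * polyEl c d = polyEl (c₁ * a) d := by
  have hex : ∃ c₁, c = c₁ * b := ⟨c₁, h⟩
  have hchoose : Classical.choose hex = c₁ :=
    mul_right_cancel ((Classical.choose_spec hex).symm.trans h)
  show polyMul _ _ = _
  simp only [polyMul, polyEl, Option.bind_some, dif_pos hex, hchoose]

theorem polyEl_mul_polyEl_of_right_eq {a b c d b₁ : FreeMonoid ι} (h : b = b₁ * c) :
    polyEl a b * polyEl c d = polyEl a (b₁ * d) := by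
  by_cases hex : ∃ c₁, c = c₁ * b
  · obtain ⟨c₁, hc₁⟩ := hex
    -- `b = b₁ * c₁ * b` forces `b₁ = c₁ = 1`
    have hunit : b₁ * c₁ = 1 := mul_eq_right.1 (by rw [mul_assoc, ← hc₁, ← h])
    obtain ⟨rfl, rfl⟩ := mul_eq_one'.1 hunit
    rw [polyEl_mul_polyEl_of_left_eq hc₁, one_mul, one_mul]
  · have hex' : ∃ b₁, b = b₁ * c := ⟨b₁, h⟩
    have hchoose : Classical.choose hex' = b₁ :=
      mul_right_cancel ((Classical.choose_spec hex').symm.trans h)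
    show polyMul _ _ = _
    simp only [polyMul, polyEl, Option.bind_some, dif_neg hex, dif_pos hex', hchoose]

theorem polyEl_mul_polyEl_eq_zero {a b c d : FreeMonoid ι} (h₁ : ¬∃ c₁, c = c₁ * b)
    (h₂ : ¬∃ b₁, b = b₁ * c) : polyEl a b * polyEl c d = 0 := by
  show polyMul _ _ = _
  simp only [polyMul, polyEl, Option.bind_some, dif_neg h₁, dif_neg h₂]
  rfl

theorem polyEl_mul_self_eq_iff {a b : FreeMonoid ι} :
    polyEl a b * polyEl a b = polyEl a b ↔ a = b := by
  refine ⟨fun h => ?_, fun h => ?_⟩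
  · by_cases h₁ : ∃ c₁, a = c₁ * b
    · obtain ⟨c₁, hc₁⟩ := h₁
      rw [polyEl_mul_polyEl_of_left_eq hc₁, polyEl_inj, mul_eq_right] at h
      rw [hc₁, h.1, one_mul]
    · by_cases h₂ : ∃ b₁, b = b₁ * a
      · obtain ⟨b₁, hb₁⟩ := h₂
        rw [polyEl_mul_polyEl_of_right_eq hb₁, polyEl_inj, mul_eq_right] at h
        rw [hb₁, h.2, one_mul]
      · exact absurd (polyEl_mul_polyEl_eq_zero h₁ h₂ ▸ h).symm (polyEl_ne_zero a b)
  · subst h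
    rw [polyEl_mul_polyEl_of_left_eq (one_mul a).symm, one_mul]

theorem idemLE_zero_left (x : PolyMon ι) : idemLE 0 x :=
  ⟨zero_mul x, mul_zero x⟩

theorem idemLE_polyEl_iff {a b : FreeMonoid ι} :
    idemLE (polyEl a a) (polyEl b b) ↔ ∃ c, a = c * b := by
  refine ⟨fun h => ?_, fun ⟨c, hc⟩ =>
    ⟨polyEl_mul_polyEl_of_right_eq hc ▸ hc ▸ rfl, polyEl_mul_polyEl_of_left_eq hc ▸ hc ▸ rfl⟩⟩
  by_contra hnot
  by_cases hba : ∃ c, b = c * a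
  · obtain ⟨c, hc⟩ := hba
    have h' := h.1
    rw [polyEl_mul_polyEl_of_left_eq hc, polyEl_inj] at h'
    exact hnot ⟨1, by rw [one_mul, h'.2]⟩
  · exact polyEl_ne_zero a a (h.1.symm.trans (polyEl_mul_polyEl_eq_zero hba hnot))

end PolyMon

section Chains

variable {ι : Type u} {L : Set (PolyMon ι)}

open PolyMon

theorem IsMaxChainIdem.mem_of_forall {e : PolyMon ι} (hL : IsMaxChainIdem L) (he : e ∈ idemE ι)
    (h : ∀ f ∈ L, idemLE e f ∨ idemLE f e) : e ∈ L := by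
  have hchain : IsChainIdem (insert e L) := by
    refine ⟨Set.insert_subset he hL.1.1, ?_⟩
    rintro x (rfl | hx) y (rfl | hy)
    · exact Or.inl ⟨he, he⟩
    · exact h y hy
    · exact (h x hx).symm
    · exact hL.1.2 x hx y hy
  exact hL.2 _ hchain (Set.subset_insert e L) ▸ Set.mem_insert e L

theorem IsMaxChainIdem.zero_mem (hL : IsMaxChainIdem L) : 0 ∈ L :=
  hL.mem_of_forall rfl fun f _ => Or.inl (idemLE_zero_left f)

def idemOfWord (w : List ι) : PolyMon ι :=
  polyEl (FreeMonoid.ofList w) (FreeMonoid.ofList w)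

theorem idemOfWord_ne_zero (w : List ι) : idemOfWord w ≠ 0 :=
  polyEl_ne_zero _ _

theorem idemOfWord_mem_idemE (w : List ι) : idemOfWord w ∈ idemE ι :=
  polyEl_mul_self_eq_iff.2 rfl

theorem eq_zero_or_exists_eq_idemOfWord {x : PolyMon ι} (hx : x ∈ idemE ι) :
    x = 0 ∨ ∃ w, x = idemOfWord w := by
  rcases x with _ | ⟨a, b⟩
  · exact Or.inl rfl
  · obtain rfl : a = b := polyEl_mul_self_eq_iff.1 hx
    exact Or.inr ⟨FreeMonoid.toList a, rfl⟩

theorem idemLE_idemOfWord_iff {v w : List ι} :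
    idemLE (idemOfWord v) (idemOfWord w) ↔ w <:+ v := by
  rw [idemOfWord, idemOfWord, idemLE_polyEl_iff]
  refine ⟨fun ⟨c, hc⟩ => ⟨c.toList, ?_⟩, fun ⟨t, ht⟩ => ⟨FreeMonoid.ofList t, ?_⟩⟩
  · simpa using congrArg FreeMonoid.toList hc.symm
  · exact FreeMonoid.toList.injective (by simpa using ht.symm)

theorem IsMaxChainIdem.isMaxChain_preimage_idemOfWord (hL : IsMaxChainIdem L) :
    IsMaxChain (· <:+ ·) (idemOfWord ⁻¹' L) := by
  refine ⟨fun v hv w hw _ => ?_, fun T hT hLT => ?_⟩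
  · rcases hL.1.2 _ hv _ hw with h | h
    · exact Or.inr (idemLE_idemOfWord_iff.1 h)
    · exact Or.inl (idemLE_idemOfWord_iff.1 h)
  · refine hLT.antisymm fun w hw => hL.mem_of_forall (idemOfWord_mem_idemE w) fun f hf => ?_
    rcases eq_zero_or_exists_eq_idemOfWord (hL.1.1 hf) with rfl | ⟨v, rfl⟩
    · exact Or.inr (idemLE_zero_left _)
    · simpa only [idemLE_idemOfWord_iff] using hT.total (hLT hf) hw

theorem bijective_idemOfWord_restrict (L : Set (PolyMon ι)) (hL : L ⊆ idemE ι) :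
    Function.Bijective fun w : idemOfWord ⁻¹' L =>
      (⟨idemOfWord w, w.2, idemOfWord_ne_zero w.1⟩ : ↥(L \ {0})) := by
  refine ⟨fun v w h => ?_, fun ⟨x, hxL, hx0⟩ => ?_⟩
  · have h' := congrArg (fun x : ↥(L \ {0}) => (x : PolyMon ι)) h
    simp only [idemOfWord, polyEl_inj, FreeMonoid.ofList.injective.eq_iff] at h'
    exact Subtype.ext h'.1
  · rcases eq_zero_or_exists_eq_idemOfWord (hL hxL) with rfl | ⟨w, rfl⟩
    · exact absurd rfl hx0
    · exact ⟨⟨w, hxL⟩, rfl⟩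

end Chains

/-- For λ ≥ 2, every maximal chain `L` of the semilattice `E(P_λ)` of idempotents of the
λ-polycyclic monoid contains `0`, and `L \ {0}` is an ω-chain: there is a bijection of
`L \ {0}` with `ℕ` reversing the order, i.e. `L \ {0}` is order-isomorphic to the chain
`{0, −1, −2, …}` of non-positive integers. -/
theorem statement_10 {ι : Type u} [Nontrivial ι] (L : Set (PolyMon ι))
    (hL : IsMaxChainIdem L) :
    (0 : PolyMon ι) ∈ L ∧
    ∃ g : ↥(L \ {0}) ≃ ℕ, ∀ x y : ↥(L \ {0}), idemLE (x : PolyMon ι) (y : PolyMon ι) ↔ g y ≤ g x := by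
  have hS := hL.isMaxChain_preimage_idemOfWord
  let e := Equiv.ofBijective _ (bijective_idemOfWord_restrict L hL.1.1)
  refine ⟨hL.zero_mem, e.symm.trans (Equiv.ofBijective _ hS.bijective_length), fun x y => ?_⟩
  obtain ⟨v, rfl⟩ := e.surjective x
  obtain ⟨w, rfl⟩ := e.surjective y
  simp [e, idemLE_idemOfWord_iff, hS.isSuffix_iff_length_le v.2 w.2]
end

section
/- For any cardinal λ ≥ 2, the set E(P_λ) = {0} ∪ {a⁻¹a : a ∈ M_λ} of idempotents of the λ-polycyclic monoid P_λ is a compact subset of (P_λ, τ_mi). -/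
universe u v

/-- The basic neighbourhood `U_A(0) = {a⁻¹b : a, b ∈ M_λ \ A} ∪ {0}` of zero. -/
def U0 {ι : Type u} (A : Set (FreeMonoid ι)) : Set (PolyMon ι) :=
  {x | x = 0 ∨ ∃ a b : FreeMonoid ι, a ∉ A ∧ b ∉ A ∧ x = polyEl a b}

/-- The topology `τ_mi` on the polycyclic monoid: all nonzero elements are isolated and
the sets `U_A(0)`, for `A` a finite subset of the free monoid, form a base at `0`. -/
def tauMi (ι : Type u) : TopologicalSpace (PolyMon ι) :=
  TopologicalSpace.generateFrom
    ({s | ∃ x : PolyMon ι, x ≠ 0 ∧ s = {x}} ∪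
     {s | ∃ A : Set (FreeMonoid ι), A.Finite ∧ s = U0 A})

/-! The family `a ↦ a⁻¹a` tends to `0` along the cofinite filter, because a basic neighbourhood
`U_A(0)` misses `a⁻¹a` only for the finitely many `a ∈ A`; a family converging along the
cofinite filter, together with its limit, is compact. -/

open Filter Set

section PolycyclicTopology

variable {ι : Type u}

lemma U0_anti {A B : Set (FreeMonoid ι)} (h : A ⊆ B) : U0 B ⊆ U0 A := by
  rintro x (rfl | ⟨a, b, ha, hb, rfl⟩)
  · exact Or.inl rfl
  · exact Or.inr ⟨a, b, fun hx => ha (h hx), fun hx => hb (h hx), rfl⟩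

lemma zero_mem_U0 (A : Set (FreeMonoid ι)) : (0 : PolyMon ι) ∈ U0 A := Or.inl rfl

lemma tauMi_generators_zero_mem :
    {s : Set (PolyMon ι) | 0 ∈ s ∧ s ∈ ({s | ∃ x : PolyMon ι, x ≠ 0 ∧ s = {x}} ∪
      {s | ∃ A : Set (FreeMonoid ι), A.Finite ∧ s = U0 A})} = U0 '' {A | A.Finite} := by
  ext s
  constructor
  · rintro ⟨h0, ⟨x, hx, rfl⟩ | ⟨A, hA, rfl⟩⟩
    · exact absurd h0.symm hx
    · exact ⟨A, hA, rfl⟩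
  · rintro ⟨A, hA, rfl⟩
    exact ⟨zero_mem_U0 A, Or.inr ⟨A, hA, rfl⟩⟩

lemma tauMi_nhds_zero_hasBasis :
    (@nhds (PolyMon ι) (tauMi ι) 0).HasBasis Set.Finite U0 := by
  rw [tauMi, TopologicalSpace.nhds_generateFrom, tauMi_generators_zero_mem, iInf_image]
  refine hasBasis_biInf_principal' (fun A hA B hB => ?_) ⟨∅, finite_empty⟩
  exact ⟨A ∪ B, hA.union hB, U0_anti subset_union_left, U0_anti subset_union_right⟩

lemma tendsto_polyEl_diag_cofinite_nhds_zero :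
    Tendsto (fun a : FreeMonoid ι => polyEl a a) cofinite (@nhds _ (tauMi ι) 0) :=
  tauMi_nhds_zero_hasBasis.tendsto_right_iff.2 fun _ hA =>
    hA.eventually_cofinite_notMem.mono fun a ha => Or.inr ⟨a, a, ha, ha, rfl⟩

end PolycyclicTopology

theorem statement_16_general (ι : Type u) :
    @IsCompact (PolyMon ι) (tauMi ι)
      {x : PolyMon ι | x = 0 ∨ ∃ a : FreeMonoid ι, x = polyEl a a} := by
  let _ : TopologicalSpace (PolyMon ι) := tauMi ι
  convert tendsto_polyEl_diag_cofinite_nhds_zero.isCompact_insert_range_of_cofinite using 1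
  ext x
  simp only [mem_ofPred_eq, mem_insert_iff, mem_range, eq_comm]

/-- For λ ≥ 2, the set `E(P_λ) = {0} ∪ {a⁻¹a : a ∈ M_λ}` of idempotents of the
λ-polycyclic monoid is a compact subset of `(P_λ, τ_mi)`. -/
theorem statement_16 (ι : Type u) [Nontrivial ι] :
    @IsCompact (PolyMon ι) (tauMi ι)
      {x : PolyMon ι | x = 0 ∨ ∃ a : FreeMonoid ι, x = polyEl a a} :=
  statement_16_general ι
end
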